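/- Let G be a diamond-free graph that belongs to G_2. Then G is (theta, pyramid, long prism, wheel)-free. -/

import Mathlib

open SimpleGraph

namespace PaperSep

variable {V : Type} {W : Type}

/-- There is a walk from `a` to `b` in `G` all of whose vertices avoid the set `S`. -/
def ConnAvoid (G : SimpleGraph V) (S : Set V) (a b : V) : Prop :=
  ∃ p : G.Walk a b, ∀ v ∈ p.support, v ∉ S

/-- `S` is an `(a,b)`-separator of `G`. -/
def IsSep (G : SimpleGraph V) (a b : V) (S : Set V) : Prop :=
  a ∉ S ∧ b ∉ S ∧ ¬ ConnAvoid G S a b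

/-- `S` is a minimal `(a,b)`-separator of `G`. -/
def IsMinSep (G : SimpleGraph V) (a b : V) (S : Set V) : Prop :=
  IsSep G a b S ∧ ∀ T ⊂ S, ¬ IsSep G a b T

/-- `S` is a minimal separator of `G`. -/
def IsMinimalSeparator (G : SimpleGraph V) (S : Set V) : Prop :=
  ∃ a b : V, a ≠ b ∧ ¬ G.Adj a b ∧ IsMinSep G a b S

/-- `K` is a cutset of `G`, i.e. `G − K` is disconnected. -/
def IsCutset (G : SimpleGraph V) (K : Set V) : Prop :=
  ∃ a b : V, a ∉ K ∧ b ∉ K ∧ ¬ ConnAvoid G K a b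

/-- `K` is a minimal cutset of `G`. -/
def IsMinimalCutset (G : SimpleGraph V) (K : Set V) : Prop :=
  IsCutset G K ∧ ∀ T ⊂ K, ¬ IsCutset G T

/-- A class of finite graphs. -/
def GraphClass : Type 1 :=
  ∀ (α : Type) [Finite α], SimpleGraph α → Prop

/-- A class is hereditary if it is closed under isomorphism and induced subgraphs. -/
def Hereditary (C : GraphClass) : Prop :=
  ∀ (α : Type) [Finite α] (G : SimpleGraph α) (β : Type) [Finite β] (H : SimpleGraph β)
    (s : Set α), Nonempty (H ≃g G.induce s) → C α G → C β H

/-- `G ∈ 𝒢_C` : every minimal separator of `G` induces a graph in `C`. -/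
def MemGC (C : GraphClass) {α : Type} [Finite α] (G : SimpleGraph α) : Prop :=
  ∀ S : Set α, IsMinimalSeparator G S → C ↥S (G.induce S)

/-- The class `𝒢_C`. -/
def GCclass (C : GraphClass) : GraphClass :=
  fun α inst G => @MemGC C α inst G

/-- `S` is a union of `k` (possibly empty) cliques of `G`. -/
def UnionOfCliques (G : SimpleGraph V) (k : ℕ) (S : Set V) : Prop :=
  ∃ f : Fin k → Set V, (∀ i, G.IsClique (f i)) ∧ S = ⋃ i, f i

/-- `G ∈ 𝒢_k` : every minimal separator of `G` is a union of `k` cliques. -/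
def MemGk (k : ℕ) (G : SimpleGraph V) : Prop :=
  ∀ S : Set V, IsMinimalSeparator G S → UnionOfCliques G k S

/-- The class `𝒢_k`. -/
def Gkclass (k : ℕ) : GraphClass := fun _ _ G => MemGk k G

/-- The class `𝒞_k` of graphs whose vertex set is a union of `k` cliques. -/
def Ckclass (k : ℕ) : GraphClass := fun _ _ G => UnionOfCliques G k Set.univ

/-- An induced minor model of `H` in `G`. -/
def IsIMModel (G : SimpleGraph V) (H : SimpleGraph W) (X : W → Set V) : Prop :=
  (∀ w, (X w).Nonempty) ∧
  (∀ u w : W, u ≠ w → Disjoint (X u) (X w)) ∧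
  (∀ w, (G.induce (X w)).Connected) ∧
  (∀ u w : W, u ≠ w → (H.Adj u w ↔ ∃ a ∈ X u, ∃ b ∈ X w, G.Adj a b))

/-- `H` is an induced minor of `G`. -/
def IsInducedMinor (H : SimpleGraph W) (G : SimpleGraph V) : Prop :=
  ∃ X : W → Set V, IsIMModel G H X

/-- The class `C` is closed under induced minors. -/
def IMClosed (C : GraphClass) : Prop :=
  ∀ (α : Type) [Finite α] (G : SimpleGraph α) (β : Type) [Finite β] (H : SimpleGraph β),
    C α G → IsInducedMinor H G → C β H

/-- The class `C` is closed under the addition of edges. -/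
def EdgeAddClosed (C : GraphClass) : Prop :=
  ∀ (α : Type) [Finite α] (G : SimpleGraph α) (a b : α), a ≠ b → ¬ G.Adj a b →
    C α G → C α (G ⊔ SimpleGraph.edge a b)

/-- `G ∈ ℳ_C` : `G ∉ C` but every proper induced minor of `G` is in `C`.
(For finite graphs, the proper induced minors of `G` are exactly the induced minors of `G`
not isomorphic to `G`.) -/
def MemMC (C : GraphClass) {α : Type} [Finite α] (G : SimpleGraph α) : Prop :=
  ¬ C α G ∧
  ∀ (β : Type) [Finite β] (H : SimpleGraph β),
    IsInducedMinor H G → IsEmpty (H ≃g G) → C β H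

/-- The complete join of two graphs. -/
def join (G : SimpleGraph V) (H : SimpleGraph W) : SimpleGraph (V ⊕ W) :=
  SimpleGraph.fromRel (fun x y =>
    match x, y with
    | Sum.inl a, Sum.inl b => G.Adj a b
    | Sum.inr a, Sum.inr b => H.Adj a b
    | _, _ => True)

/-- The class `C` is closed under the addition of universal vertices (up to isomorphism). -/
def UnivAddClosed (C : GraphClass) : Prop :=
  ∀ (α : Type) [Finite α] (G : SimpleGraph α) (β : Type) [Finite β] (H : SimpleGraph β),
    C α G → Nonempty (H ≃g join (⊥ : SimpleGraph (Fin 1)) G) → C β H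

/-- `G` has a universal vertex. -/
def HasUniversalVertex (G : SimpleGraph V) : Prop :=
  ∃ v : V, ∀ w : V, w ≠ v → G.Adj v w



/-- `G` is a theta: two nonadjacent vertices joined by three internally disjoint induced
paths of length at least two, with no other vertices or edges
(equivalently, a subdivision of `K_{2,3}`). -/
def IsTheta (G : SimpleGraph V) : Prop :=
  ∃ (a b : V) (P₁ P₂ P₃ : G.Walk a b),
    a ≠ b ∧
    P₁.IsPath ∧ P₂.IsPath ∧ P₃.IsPath ∧
    2 ≤ P₁.length ∧ 2 ≤ P₂.length ∧ 2 ≤ P₃.length ∧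
    (∀ v : V, v ∈ P₁.support → v ∈ P₂.support → v = a ∨ v = b) ∧
    (∀ v : V, v ∈ P₁.support → v ∈ P₃.support → v = a ∨ v = b) ∧
    (∀ v : V, v ∈ P₂.support → v ∈ P₃.support → v = a ∨ v = b) ∧
    (∀ v : V, v ∈ P₁.support ∨ v ∈ P₂.support ∨ v ∈ P₃.support) ∧
    (∀ u v : V, G.Adj u v ↔
      s(u, v) ∈ P₁.edges ∨ s(u, v) ∈ P₂.edges ∨ s(u, v) ∈ P₃.edges)

/-- `G` is a pyramid: an apex `a` joined to a triangle `b₁b₂b₃` by three paths sharing only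
`a`, at least two of which have length at least two, with no other vertices or edges. -/
def IsPyramid (G : SimpleGraph V) : Prop :=
  ∃ (a b₁ b₂ b₃ : V) (P₁ : G.Walk a b₁) (P₂ : G.Walk a b₂) (P₃ : G.Walk a b₃),
    G.Adj b₁ b₂ ∧ G.Adj b₁ b₃ ∧ G.Adj b₂ b₃ ∧
    P₁.IsPath ∧ P₂.IsPath ∧ P₃.IsPath ∧
    1 ≤ P₁.length ∧ 1 ≤ P₂.length ∧ 1 ≤ P₃.length ∧
    ((2 ≤ P₁.length ∧ 2 ≤ P₂.length) ∨ (2 ≤ P₁.length ∧ 2 ≤ P₃.length) ∨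
      (2 ≤ P₂.length ∧ 2 ≤ P₃.length)) ∧
    (∀ v : V, v ∈ P₁.support → v ∈ P₂.support → v = a) ∧
    (∀ v : V, v ∈ P₁.support → v ∈ P₃.support → v = a) ∧
    (∀ v : V, v ∈ P₂.support → v ∈ P₃.support → v = a) ∧
    (∀ v : V, v ∈ P₁.support ∨ v ∈ P₂.support ∨ v ∈ P₃.support) ∧
    (∀ u v : V, G.Adj u v ↔
      s(u, v) ∈ P₁.edges ∨ s(u, v) ∈ P₂.edges ∨ s(u, v) ∈ P₃.edges ∨
      s(u, v) = s(b₁, b₂) ∨ s(u, v) = s(b₁, b₃) ∨ s(u, v) = s(b₂, b₃))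

/-- `G` is a prism: two disjoint triangles joined by three pairwise disjoint paths, with no
other vertices or edges. -/
def IsPrism (G : SimpleGraph V) : Prop :=
  ∃ (a₁ a₂ a₃ b₁ b₂ b₃ : V) (P₁ : G.Walk a₁ b₁) (P₂ : G.Walk a₂ b₂) (P₃ : G.Walk a₃ b₃),
    G.Adj a₁ a₂ ∧ G.Adj a₁ a₃ ∧ G.Adj a₂ a₃ ∧
    G.Adj b₁ b₂ ∧ G.Adj b₁ b₃ ∧ G.Adj b₂ b₃ ∧
    P₁.IsPath ∧ P₂.IsPath ∧ P₃.IsPath ∧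
    1 ≤ P₁.length ∧ 1 ≤ P₂.length ∧ 1 ≤ P₃.length ∧
    (∀ v : V, v ∈ P₁.support → v ∈ P₂.support → False) ∧
    (∀ v : V, v ∈ P₁.support → v ∈ P₃.support → False) ∧
    (∀ v : V, v ∈ P₂.support → v ∈ P₃.support → False) ∧
    (∀ v : V, v ∈ P₁.support ∨ v ∈ P₂.support ∨ v ∈ P₃.support) ∧
    (∀ u v : V, G.Adj u v ↔
      s(u, v) ∈ P₁.edges ∨ s(u, v) ∈ P₂.edges ∨ s(u, v) ∈ P₃.edges ∨
      s(u, v) = s(a₁, a₂) ∨ s(u, v) = s(a₁, a₃) ∨ s(u, v) = s(a₂, a₃) ∨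
      s(u, v) = s(b₁, b₂) ∨ s(u, v) = s(b₁, b₃) ∨ s(u, v) = s(b₂, b₃))

/-- `G` is a long prism: a prism other than the complement of `C₆`, i.e. a prism in which at
least one of the three paths has length at least two. -/
def IsLongPrism (G : SimpleGraph V) : Prop :=
  ∃ (a₁ a₂ a₃ b₁ b₂ b₃ : V) (P₁ : G.Walk a₁ b₁) (P₂ : G.Walk a₂ b₂) (P₃ : G.Walk a₃ b₃),
    G.Adj a₁ a₂ ∧ G.Adj a₁ a₃ ∧ G.Adj a₂ a₃ ∧
    G.Adj b₁ b₂ ∧ G.Adj b₁ b₃ ∧ G.Adj b₂ b₃ ∧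
    P₁.IsPath ∧ P₂.IsPath ∧ P₃.IsPath ∧
    1 ≤ P₁.length ∧ 1 ≤ P₂.length ∧ 1 ≤ P₃.length ∧
    (2 ≤ P₁.length ∨ 2 ≤ P₂.length ∨ 2 ≤ P₃.length) ∧
    (∀ v : V, v ∈ P₁.support → v ∈ P₂.support → False) ∧
    (∀ v : V, v ∈ P₁.support → v ∈ P₃.support → False) ∧
    (∀ v : V, v ∈ P₂.support → v ∈ P₃.support → False) ∧
    (∀ v : V, v ∈ P₁.support ∨ v ∈ P₂.support ∨ v ∈ P₃.support) ∧
    (∀ u v : V, G.Adj u v ↔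
      s(u, v) ∈ P₁.edges ∨ s(u, v) ∈ P₂.edges ∨ s(u, v) ∈ P₃.edges ∨
      s(u, v) = s(a₁, a₂) ∨ s(u, v) = s(a₁, a₃) ∨ s(u, v) = s(a₂, a₃) ∨
      s(u, v) = s(b₁, b₂) ∨ s(u, v) = s(b₁, b₃) ∨ s(u, v) = s(b₂, b₃))

/-- `G` is a wheel: a hole (chordless cycle of length at least four) together with one
additional vertex having at least three neighbors on the hole. -/
def IsWheel (G : SimpleGraph V) : Prop :=
  ∃ (v x : V) (c : G.Walk x x),
    c.IsCycle ∧ 4 ≤ c.length ∧ v ∉ c.support ∧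
    (∀ u : V, u = v ∨ u ∈ c.support) ∧
    (∀ u w : V, u ∈ c.support → w ∈ c.support → G.Adj u w → s(u, w) ∈ c.edges) ∧
    3 ≤ {u : V | u ∈ c.support ∧ G.Adj v u}.ncard

/-- `G` is a broken wheel: a wheel in which the neighbors of the additional vertex induce a
disconnected subgraph of the hole. -/
def IsBrokenWheel (G : SimpleGraph V) : Prop :=
  ∃ (v x : V) (c : G.Walk x x),
    c.IsCycle ∧ 4 ≤ c.length ∧ v ∉ c.support ∧
    (∀ u : V, u = v ∨ u ∈ c.support) ∧
    (∀ u w : V, u ∈ c.support → w ∈ c.support → G.Adj u w → s(u, w) ∈ c.edges) ∧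
    3 ≤ {u : V | u ∈ c.support ∧ G.Adj v u}.ncard ∧
    ¬ (G.induce {u : V | u ∈ c.support ∧ G.Adj v u}).Connected

/-- `G` is diamond-free: it has no induced subgraph isomorphic to `K₄` minus an edge. -/
def DiamondFree (G : SimpleGraph V) : Prop :=
  ¬ ∃ a b c d : V, c ≠ d ∧ G.Adj a b ∧ G.Adj a c ∧ G.Adj a d ∧ G.Adj b c ∧ G.Adj b d ∧
    ¬ G.Adj c d

/-- The short `n`-prism: two `n`-vertex cliques joined by a perfect matching. -/
def completePrism (n : ℕ) : SimpleGraph (Fin n ⊕ Fin n) :=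
  SimpleGraph.fromRel (fun x y =>
    match x, y with
    | Sum.inl _, Sum.inl _ => True
    | Sum.inr _, Sum.inr _ => True
    | Sum.inl i, Sum.inr j => i = j
    | Sum.inr i, Sum.inl j => i = j)

/-- `G` is a complete prism, i.e. a short `n`-prism for some `n ≥ 3`. -/
def IsCompletePrism (G : SimpleGraph V) : Prop :=
  ∃ n : ℕ, 3 ≤ n ∧ Nonempty (G ≃g completePrism n)

/-- `G` is a cycle. -/
def IsCycleGraph (G : SimpleGraph V) : Prop :=
  ∃ n : ℕ, 3 ≤ n ∧ Nonempty (G ≃g cycleGraph n)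

/-- `G` is a complete graph. -/
def IsCompleteGraph (G : SimpleGraph V) : Prop :=
  ∀ u v : V, u ≠ v → G.Adj u v

/-- `G` has a clique-cutset. -/
def HasCliqueCutset (G : SimpleGraph V) : Prop :=
  ∃ K : Set V, G.IsClique K ∧ IsCutset G K

/-! Each of a theta, a pyramid, a long prism and a wheel contains two nonadjacent vertices `a`, `b`,
a set `K ∋ a, b` inside which `a` cannot reach `b`, and three `a`–`b` paths which, outside `K`, are
pairwise disjoint and anticomplete. For a wheel with hub `v` and two nonadjacent neighbours `u`, `w`
of `v` on the hole, the paths are `u v w` and the two arcs of the hole, and `K` is the set of hole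
neighbours of `v`: diamond-freeness splits it into the part adjacent or equal to `u` and the rest.
A minimal `(a,b)`-separator avoiding `K` meets all three paths, hence contains three pairwise
nonadjacent vertices, and so is not a union of two cliques. -/

end PaperSep

namespace SimpleGraph.Walk

variable {V : Type} {G : SimpleGraph V}

theorem IsPath.ne_of_one_le_length {u v : V} {p : G.Walk u v} (hp : p.IsPath)
    (hl : 1 ≤ p.length) : u ≠ v :=
  fun huv => not_nil_iff_lt_length.2 hl (hp.nil_iff_eq.2 huv)

theorem IsCycle.false_of_triangle {x p q r : V} {c : G.Walk x x} (hc : c.IsCycle)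
    (hlen : 4 ≤ c.length) (hpq : s(p, q) ∈ c.edges) (hpr : s(p, r) ∈ c.edges)
    (hqr : s(q, r) ∈ c.edges) : False := by
  classical
  have hp := c.fst_mem_support_of_mem_edges hpq
  set d := c.rotate p hp
  have hd : d.IsCycle := hc.rotate hp
  have hdlen : d.length = c.length := length_rotate c p hp
  have hadj : ∀ {y z}, s(y, z) ∈ c.edges → d.toSubgraph.Adj y z := fun h =>
    adj_toSubgraph_iff_mem_edges.2 ((rotate_edges c p hp).mem_iff.2 h)
  -- The neighbours of `p` in `d` are `d.snd` and `d.penultimate`, so these are `q`, `r` and are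
  -- adjacent; but the neighbours of `d.snd` are `p` and `d.getVert 2`, which forces length three.
  have hq : q ∈ d.toSubgraph.neighborSet p := hadj hpq
  have hr : r ∈ d.toSubgraph.neighborSet p := hadj hpr
  rw [hd.neighborSet_toSubgraph_endpoint] at hq hr
  have hend : d.toSubgraph.Adj d.snd d.penultimate := by
    have hqr' := hadj hqr
    rcases hq with rfl | rfl <;> rcases hr with rfl | rfl
    exacts [absurd rfl hqr'.ne, hqr', hqr'.symm, absurd rfl hqr'.ne]
  have h2 : d.penultimate ∈ d.toSubgraph.neighborSet (d.getVert 1) := hend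
  rw [hd.neighborSet_toSubgraph_internal one_ne_zero (by omega)] at h2
  have hinj := hd.getVert_injOn
  rcases h2 with h2 | h2
  · have h2 : d.getVert (d.length - 1) = d.getVert d.length := by simpa using h2
    have := hinj ⟨by omega, by omega⟩ ⟨by omega, le_rfl⟩ h2
    omega
  · have := hinj ⟨by omega, by omega⟩ ⟨by omega, by omega⟩ h2
    omega

theorem IsCycle.eq_or_eq_of_mem_support_append {u w y : V} {p : G.Walk u w} {q : G.Walk w u}
    (h : (p.append q).IsCycle) (hyp : y ∈ p.support) (hyq : y ∈ q.support) : y = u ∨ y = w := by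
  have hnd := ((isCycle_def _).1 h).2.2
  rw [support_append, ← p.cons_tail_support, List.cons_append, List.tail_cons] at hnd
  rw [← p.cons_tail_support, List.mem_cons] at hyp
  rw [← q.cons_tail_support, List.mem_cons] at hyq
  rcases hyp with rfl | hyp
  · exact .inl rfl
  rcases hyq with rfl | hyq
  · exact .inr rfl
  exact absurd hyq (List.disjoint_of_nodup_append hnd hyp)

theorem IsCycle.exists_arcs {x u w : V} {c : G.Walk x x} (hc : c.IsCycle) (hu : u ∈ c.support)
    (hw : w ∈ c.support) :
    ∃ p q : G.Walk u w, (∀ y ∈ p.support, y ∈ c.support) ∧ (∀ y ∈ q.support, y ∈ c.support) ∧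
      (∀ y ∈ p.support, y ∈ q.support → y = u ∨ y = w) ∧
      ∀ e ∈ c.edges, e ∈ p.edges ∨ e ∈ q.edges := by
  classical
  set d := c.rotate u hu
  have hwd : w ∈ d.support := (mem_support_rotate_iff c u hu).2 hw
  have hd : ((d.takeUntil w hwd).append (d.dropUntil w hwd)).IsCycle := by
    rw [take_spec]
    exact hc.rotate hu
  refine ⟨d.takeUntil w hwd, (d.dropUntil w hwd).reverse, fun y hy => ?_, fun y hy => ?_,
    fun y hyp hyq => hd.eq_or_eq_of_mem_support_append hyp (by simpa using hyq), fun e he => ?_⟩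
  · exact (mem_support_rotate_iff c u hu).1 (d.support_takeUntil_subset_support hwd hy)
  · rw [support_reverse, List.mem_reverse] at hy
    exact (mem_support_rotate_iff c u hu).1 (d.support_dropUntil_subset_support hwd hy)
  · have he' : e ∈ ((d.takeUntil w hwd).append (d.dropUntil w hwd)).edges := by
      rw [take_spec]
      exact (rotate_edges c u hu).mem_iff.2 he
    rw [edges_append, List.mem_append] at he'
    simpa using he'

theorem IsCycle.exists_not_adj_of_three_le_ncard {x : V} {c : G.Walk x x} (hc : c.IsCycle)
    (hlen : 4 ≤ c.length)
    (hchord : ∀ y z, y ∈ c.support → z ∈ c.support → G.Adj y z → s(y, z) ∈ c.edges)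
    {N : Set V} (hN : ∀ y ∈ N, y ∈ c.support) (h3 : 3 ≤ N.ncard) :
    ∃ u ∈ N, ∃ w ∈ N, u ≠ w ∧ ¬ G.Adj u w := by
  obtain ⟨t, htN, ht⟩ := Set.exists_subset_card_eq h3
  obtain ⟨t₁, t₂, t₃, h₁₂, h₁₃, h₂₃, rfl⟩ := Set.ncard_eq_three.1 ht
  have ht₁ := htN (by simp : t₁ ∈ _)
  have ht₂ := htN (by simp : t₂ ∈ _)
  have ht₃ := htN (by simp : t₃ ∈ _)
  by_contra! hadj
  exact hc.false_of_triangle hlen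
    (hchord _ _ (hN _ ht₁) (hN _ ht₂) (hadj _ ht₁ _ ht₂ h₁₂))
    (hchord _ _ (hN _ ht₁) (hN _ ht₃) (hadj _ ht₁ _ ht₃ h₁₃))
    (hchord _ _ (hN _ ht₂) (hN _ ht₃) (hadj _ ht₂ _ ht₃ h₂₃))

end SimpleGraph.Walk

namespace PaperSep

variable {V W : Type}

section Separators

variable {G : SimpleGraph V} {a b : V} {S : Set V}

theorem IsSep.exists_mem_support (h : IsSep G a b S) (p : G.Walk a b) :
    ∃ x ∈ p.support, x ∈ S := by
  by_contra! h'
  exact h.2.2 ⟨p, h'⟩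

theorem IsSep.ne (h : IsSep G a b S) : a ≠ b := by
  rintro rfl
  obtain ⟨x, hx, hxS⟩ := h.exists_mem_support Walk.nil
  rw [Walk.support_nil, List.mem_singleton] at hx
  exact h.1 (hx ▸ hxS)

theorem IsSep.not_adj (h : IsSep G a b S) : ¬ G.Adj a b := fun hab => by
  obtain ⟨x, hx, hxS⟩ := h.exists_mem_support hab.toWalk
  simp only [Walk.support_cons, Walk.support_nil, List.mem_cons,
    List.not_mem_nil, or_false] at hx
  rcases hx with rfl | rfl
  exacts [h.1 hxS, h.2.1 hxS]

theorem IsSep.exists_isMinSep_subset [Finite V] (h : IsSep G a b S) :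
    ∃ T ⊆ S, IsMinSep G a b T := by
  obtain ⟨T, hTS, hT⟩ := exists_minimal_le_of_wellFoundedLT (IsSep G a b) S h
  exact ⟨T, hTS, hT.prop, fun T' hT' hsep => hT'.2 (hT.le_of_le hsep hT'.1)⟩

theorem isSep_compl_union {A B : Set V} (ha : a ∈ A) (hb : b ∈ B) (hbA : b ∉ A)
    (hAB : ∀ x ∈ A, ∀ y ∈ B, ¬ G.Adj x y) : IsSep G a b (A ∪ B)ᶜ := by
  refine ⟨by simp [ha], by simp [hb], fun ⟨p, hp⟩ => ?_⟩
  obtain ⟨d, hd, hdA, hdA'⟩ := p.exists_boundary_dart A ha hbA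
  have hdB : d.snd ∈ A ∪ B := not_not.1 (hp _ (p.dart_snd_mem_support_of_mem_darts hd))
  exact hAB _ hdA _ (hdB.resolve_left hdA') d.adj

theorem UnionOfCliques.not_pairwise_compl_adj {k : ℕ} {T : Set V} (hT : UnionOfCliques G k T)
    (x : Fin (k + 1) → V) (hx : ∀ i, x i ∈ T) : ¬ Pairwise fun i j => Gᶜ.Adj (x i) (x j) := by
  obtain ⟨C, hC, rfl⟩ := hT
  choose c hc using fun i => Set.mem_iUnion.1 (hx i)
  obtain ⟨i, j, hij, hcij⟩ := Fintype.exists_ne_map_eq_of_card_lt c (by simp)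
  intro hx
  have hxij := (G.compl_adj _ _).1 (hx hij)
  exact hxij.2 (hC (c i) (hc i) (hcij ▸ hc j) hxij.1)

theorem MemGk.false_of_walks [Finite V] {k : ℕ} (hG : MemGk k G) (hS : IsSep G a b S)
    (P : Fin (k + 1) → G.Walk a b)
    (hP : Pairwise fun i j => ∀ x ∈ (P i).support, ∀ y ∈ (P j).support, x ∈ S → y ∈ S →
      Gᶜ.Adj x y) : False := by
  obtain ⟨T, hTS, hT⟩ := hS.exists_isMinSep_subset
  choose x hxP hxT using fun i => hT.1.exists_mem_support (P i)
  exact (hG T ⟨a, b, hT.1.ne, hT.1.not_adj, hT⟩).not_pairwise_compl_adj x hxT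
    fun i j hij => hP hij _ (hxP i) _ (hxP j) (hTS (hxT i)) (hTS (hxT j))

end Separators

theorem pairwise_inter_subset_of_fin_three {piece : Fin 3 → Set W} {K : Set W}
    (h₀₁ : piece 0 ∩ piece 1 ⊆ K) (h₀₂ : piece 0 ∩ piece 2 ⊆ K) (h₁₂ : piece 1 ∩ piece 2 ⊆ K) :
    Pairwise fun i j => piece i ∩ piece j ⊆ K := by
  intro i j hij
  fin_cases i <;> fin_cases j <;>
    first | exact absurd rfl hij | assumption | (rw [Set.inter_comm]; assumption)

/-- The configuration of the header with `K = A ∪ B`: as no edge joins `A` to `B`, no walk inside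
`A ∪ B` leads from `a` to `b`. -/
structure PieceSplit (H : SimpleGraph W) (n : ℕ) where
  a : W
  b : W
  A : Set W
  B : Set W
  piece : Fin n → Set W
  walk : Fin n → H.Walk a b
  a_mem : a ∈ A
  b_mem : b ∈ B
  b_not_mem : b ∉ A
  not_adj : ∀ x ∈ A, ∀ y ∈ B, ¬ H.Adj x y
  support_subset : ∀ i, ∀ x ∈ (walk i).support, x ∈ piece i
  exists_piece : ∀ x y, H.Adj x y → ∃ i, x ∈ piece i ∧ y ∈ piece i
  inter_subset : Pairwise fun i j => piece i ∩ piece j ⊆ A ∪ B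

namespace PieceSplit

variable {H : SimpleGraph W} {n : ℕ}

theorem compl_adj (σ : PieceSplit H n) {i j : Fin n} (hij : i ≠ j) {x y : W}
    (hx : x ∈ σ.piece i) (hy : y ∈ σ.piece j) (hxK : x ∉ σ.A ∪ σ.B) (hyK : y ∉ σ.A ∪ σ.B) :
    Hᶜ.Adj x y := by
  refine (H.compl_adj x y).2 ⟨fun hxy => hxK (σ.inter_subset hij ⟨hx, hxy ▸ hy⟩), fun hadj => ?_⟩
  obtain ⟨l, hxl, hyl⟩ := σ.exists_piece x y hadj
  by_cases hil : i = l
  · subst hil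
    exact hyK (σ.inter_subset hij.symm ⟨hy, hyl⟩)
  · exact hxK (σ.inter_subset hil ⟨hx, hxl⟩)

end PieceSplit

theorem MemGk.false_of_pieceSplit [Finite V] {G : SimpleGraph V} {H : SimpleGraph W} {k : ℕ}
    (hG : MemGk k G) (f : H ↪g G) (σ : PieceSplit H (k + 1)) : False := by
  have hsep : IsSep G (f σ.a) (f σ.b) (f '' σ.A ∪ f '' σ.B)ᶜ :=
    isSep_compl_union (Set.mem_image_of_mem f σ.a_mem) (Set.mem_image_of_mem f σ.b_mem)
      (f.injective.mem_set_image.not.2 σ.b_not_mem) (by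
        rintro _ ⟨x, hx, rfl⟩ _ ⟨y, hy, rfl⟩
        exact f.map_adj_iff.not.2 (σ.not_adj x hx y hy))
  refine hG.false_of_walks hsep (fun i => (σ.walk i).map f.toHom) fun i j hij => ?_
  simp only [Walk.support_map, List.mem_map, ← Set.image_union]
  rintro _ ⟨x, hx, rfl⟩ _ ⟨y, hy, rfl⟩ hxK hyK
  have hxy := σ.compl_adj hij (σ.support_subset i x hx) (σ.support_subset j y hy)
    (fun h => hxK (Set.mem_image_of_mem f h)) (fun h => hyK (Set.mem_image_of_mem f h))
  exact (G.compl_adj _ _).2 ⟨f.injective.ne ((H.compl_adj x y).1 hxy).1,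
    f.map_adj_iff.not.2 ((H.compl_adj x y).1 hxy).2⟩

section Configurations

variable {H : SimpleGraph W}

theorem IsTheta.nonempty_pieceSplit (h : IsTheta H) : Nonempty (PieceSplit H 3) := by
  obtain ⟨a, b, P₁, P₂, P₃, hab, hP₁, hP₂, hP₃, hl₁, hl₂, hl₃, h₁₂, h₁₃, h₂₃, -, hadj⟩ := h
  have hends : ∀ {x}, x = a ∨ x = b → x ∈ ({a} ∪ {b} : Set W) := by
    rintro x (rfl | rfl) <;> simp
  refine ⟨{
      a := a, b := b, A := {a}, B := {b},
      piece := ![{x | x ∈ P₁.support}, {x | x ∈ P₂.support}, {x | x ∈ P₃.support}],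
      walk := ![P₁, P₂, P₃], a_mem := rfl, b_mem := rfl, b_not_mem := hab.symm,
      not_adj := ?_, support_subset := ?_, exists_piece := ?_, inter_subset := ?_ }⟩
  · rintro x rfl y rfl hxy
    rcases (hadj x y).1 hxy with he | he | he
    · have := hP₁.length_eq_one_of_mem_edges he; omega
    · have := hP₂.length_eq_one_of_mem_edges he; omega
    · have := hP₃.length_eq_one_of_mem_edges he; omega
  · intro i x hx
    fin_cases i <;> exact hx
  · intro x y hxy
    rcases (hadj x y).1 hxy with he | he | he
    · exact ⟨0, Walk.fst_mem_support_of_mem_edges _ he, Walk.snd_mem_support_of_mem_edges _ he⟩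
    · exact ⟨1, Walk.fst_mem_support_of_mem_edges _ he, Walk.snd_mem_support_of_mem_edges _ he⟩
    · exact ⟨2, Walk.fst_mem_support_of_mem_edges _ he, Walk.snd_mem_support_of_mem_edges _ he⟩
  · exact pairwise_inter_subset_of_fin_three (fun x hx => hends (h₁₂ x hx.1 hx.2))
      (fun x hx => hends (h₁₃ x hx.1 hx.2)) (fun x hx => hends (h₂₃ x hx.1 hx.2))

theorem nonempty_pieceSplit_of_pyramid {a b₁ b₂ b₃ : W} {P₁ : H.Walk a b₁}
    {P₂ : H.Walk a b₂} {P₃ : H.Walk a b₃} (e₁₂ : H.Adj b₁ b₂) (e₁₃ : H.Adj b₁ b₃)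
    (hP₁ : P₁.IsPath) (hP₂ : P₂.IsPath) (hP₃ : P₃.IsPath)
    (hl₁ : 2 ≤ P₁.length) (hl₂ : 2 ≤ P₂.length) (hl₃ : 1 ≤ P₃.length)
    (h₁₂ : ∀ v ∈ P₁.support, v ∈ P₂.support → v = a)
    (h₁₃ : ∀ v ∈ P₁.support, v ∈ P₃.support → v = a)
    (h₂₃ : ∀ v ∈ P₂.support, v ∈ P₃.support → v = a)
    (hadj : ∀ u v, H.Adj u v →
      s(u, v) ∈ P₁.edges ∨ s(u, v) ∈ P₂.edges ∨ s(u, v) ∈ P₃.edges ∨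
      s(u, v) = s(b₁, b₂) ∨ s(u, v) = s(b₁, b₃) ∨ s(u, v) = s(b₂, b₃)) :
    Nonempty (PieceSplit H 3) := by
  have hab₁ := hP₁.ne_of_one_le_length (by omega)
  have hab₂ := hP₂.ne_of_one_le_length (by omega)
  have hab₃ := hP₃.ne_of_one_le_length hl₃
  have hb₁ : b₁ ∉ P₂.support ∧ b₁ ∉ P₃.support :=
    ⟨fun h => hab₁ (h₁₂ _ P₁.end_mem_support h).symm,
      fun h => hab₁ (h₁₃ _ P₁.end_mem_support h).symm⟩
  have hb₂ : b₂ ∉ P₁.support ∧ b₂ ∉ P₃.support :=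
    ⟨fun h => hab₂ (h₁₂ _ h P₂.end_mem_support).symm,
      fun h => hab₂ (h₂₃ _ P₂.end_mem_support h).symm⟩
  -- The edge `b₂b₃` forces `b₂` into `A ∪ B`.
  refine ⟨{
      a := a, b := b₁, A := {a}, B := {b₁, b₂},
      piece := ![{x | x ∈ P₁.support}, insert b₁ {x | x ∈ P₂.support},
        {b₁, b₂} ∪ {x | x ∈ P₃.support}],
      walk := ![P₁, P₂.concat e₁₂.symm, P₃.concat e₁₃.symm],
      a_mem := rfl, b_mem := by simp, b_not_mem := hab₁.symm,
      not_adj := ?_, support_subset := ?_, exists_piece := ?_, inter_subset := ?_ }⟩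
  · rintro x rfl y hy hxy
    have := hadj _ _ hxy
    simp only [Set.mem_insert_iff, Set.mem_singleton_iff, Sym2.eq_iff] at hy this
    grind [Walk.IsPath.length_eq_one_of_mem_edges, Walk.fst_mem_support_of_mem_edges,
      Walk.snd_mem_support_of_mem_edges]
  · intro i x hx
    fin_cases i <;> simp [Walk.support_concat] at hx ⊢ <;> tauto
  · intro x y hxy
    rcases hadj x y hxy with he | he | he | he | he | he
    · exact ⟨0, P₁.fst_mem_support_of_mem_edges he, P₁.snd_mem_support_of_mem_edges he⟩
    · exact ⟨1, .inr (P₂.fst_mem_support_of_mem_edges he),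
        .inr (P₂.snd_mem_support_of_mem_edges he)⟩
    · exact ⟨2, .inr (P₃.fst_mem_support_of_mem_edges he),
        .inr (P₃.snd_mem_support_of_mem_edges he)⟩
    · rcases Sym2.eq_iff.1 he with ⟨rfl, rfl⟩ | ⟨rfl, rfl⟩ <;> exact ⟨1, by simp, by simp⟩
    all_goals rcases Sym2.eq_iff.1 he with ⟨rfl, rfl⟩ | ⟨rfl, rfl⟩ <;> exact ⟨2, by simp, by simp⟩
  · refine pairwise_inter_subset_of_fin_three ?_ ?_ ?_ <;> intro x hx <;> simp at hx ⊢ <;> grind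

theorem IsPyramid.nonempty_pieceSplit (h : IsPyramid H) : Nonempty (PieceSplit H 3) := by
  obtain ⟨a, b₁, b₂, b₃, P₁, P₂, P₃, e₁₂, e₁₃, e₂₃, hP₁, hP₂, hP₃, hl₁, hl₂, hl₃, hlong,
    h₁₂, h₁₃, h₂₃, -, hadj⟩ := h
  rcases hlong with ⟨hl₁, hl₂⟩ | ⟨hl₁, hl₃⟩ | ⟨hl₂, hl₃⟩
  · exact nonempty_pieceSplit_of_pyramid e₁₂ e₁₃ hP₁ hP₂ hP₃ hl₁ hl₂ hl₃ h₁₂ h₁₃ h₂₃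
      fun u v huv => (hadj u v).1 huv
  · refine nonempty_pieceSplit_of_pyramid e₁₃ e₁₂ hP₁ hP₃ hP₂ hl₁ hl₃ hl₂ h₁₃ h₁₂
      (fun v h₃ h₂ => h₂₃ v h₂ h₃) fun u v huv => ?_
    have := (hadj u v).1 huv
    rw [Sym2.eq_swap (a := b₂)] at this
    tauto
  · refine nonempty_pieceSplit_of_pyramid e₂₃ e₁₂.symm hP₂ hP₃ hP₁ hl₂ hl₃ hl₁ h₂₃
      (fun v h₂ h₁ => h₁₂ v h₁ h₂) (fun v h₃ h₁ => h₁₃ v h₁ h₃) fun u v huv => ?_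
    have := (hadj u v).1 huv
    rw [Sym2.eq_swap (a := b₁) (b := b₂), Sym2.eq_swap (a := b₁) (b := b₃)] at this
    tauto

theorem nonempty_pieceSplit_of_prism {a₁ a₂ a₃ b₁ b₂ b₃ : W} {P₁ : H.Walk a₁ b₁}
    {P₂ : H.Walk a₂ b₂} {P₃ : H.Walk a₃ b₃} (ea₁₂ : H.Adj a₁ a₂) (ea₁₃ : H.Adj a₁ a₃)
    (eb₁₂ : H.Adj b₁ b₂) (eb₂₃ : H.Adj b₂ b₃) (hP₁ : P₁.IsPath) (hP₂ : P₂.IsPath)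
    (hP₃ : P₃.IsPath) (hl₁ : 2 ≤ P₁.length) (hl₂ : 1 ≤ P₂.length) (hl₃ : 1 ≤ P₃.length)
    (d₁₂ : ∀ v ∈ P₁.support, v ∈ P₂.support → False)
    (d₁₃ : ∀ v ∈ P₁.support, v ∈ P₃.support → False)
    (d₂₃ : ∀ v ∈ P₂.support, v ∈ P₃.support → False)
    (hadj : ∀ u v, H.Adj u v →
      s(u, v) ∈ P₁.edges ∨ s(u, v) ∈ P₂.edges ∨ s(u, v) ∈ P₃.edges ∨
      s(u, v) = s(a₁, a₂) ∨ s(u, v) = s(a₁, a₃) ∨ s(u, v) = s(a₂, a₃) ∨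
      s(u, v) = s(b₁, b₂) ∨ s(u, v) = s(b₁, b₃) ∨ s(u, v) = s(b₂, b₃)) :
    Nonempty (PieceSplit H 3) := by
  have hab₁ := hP₁.ne_of_one_le_length (by omega)
  have hab₂ := hP₂.ne_of_one_le_length hl₂
  have hab₃ := hP₃.ne_of_one_le_length hl₃
  have ha₁ := P₁.start_mem_support
  have ha₂ := P₂.start_mem_support
  have ha₃ := P₃.start_mem_support
  have hb₁ := P₁.end_mem_support
  have hb₂ := P₂.end_mem_support
  have hb₃ := P₃.end_mem_support
  -- The edges `a₂a₃` and `b₁b₃` force `a₃` and `b₁` into `A ∪ B`.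
  refine ⟨{
      a := a₁, b := b₂, A := {a₁, a₃}, B := {b₁, b₂},
      piece := ![insert b₂ {x | x ∈ P₁.support}, {a₁, a₃} ∪ {x | x ∈ P₂.support},
        {a₁, b₁, b₂} ∪ {x | x ∈ P₃.support}],
      walk := ![P₁.concat eb₁₂, Walk.cons ea₁₂ P₂, Walk.cons ea₁₃ (P₃.concat eb₂₃.symm)],
      a_mem := by simp, b_mem := by simp, b_not_mem := ?_,
      not_adj := ?_, support_subset := ?_, exists_piece := ?_, inter_subset := ?_ }⟩
  · simp only [Set.mem_insert_iff, Set.mem_singleton_iff, not_or]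
    exact ⟨fun h => d₁₂ _ ha₁ (h ▸ hb₂), fun h => d₂₃ _ hb₂ (h ▸ ha₃)⟩
  · have hP₁a₁b₁ : s(a₁, b₁) ∉ P₁.edges := fun h => by
      have := hP₁.length_eq_one_of_mem_edges h
      omega
    intro x hx y hy hxy
    simp only [Set.mem_insert_iff, Set.mem_singleton_iff] at hx hy
    rcases hadj x y hxy with he | he | he | he
    · have := P₁.fst_mem_support_of_mem_edges he
      have := P₁.snd_mem_support_of_mem_edges he
      grind
    · have := P₂.fst_mem_support_of_mem_edges he
      have := P₂.snd_mem_support_of_mem_edges he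
      grind
    · have := P₃.fst_mem_support_of_mem_edges he
      have := P₃.snd_mem_support_of_mem_edges he
      grind
    · simp only [Sym2.eq_iff] at he
      rcases hx with rfl | rfl <;> rcases hy with rfl | rfl <;> grind
  · intro i x hx
    fin_cases i <;> simp [Walk.support_concat] at hx ⊢ <;> tauto
  · intro x y hxy
    rcases hadj x y hxy with he | he | he | he | he | he | he | he | he
    · exact ⟨0, .inr (P₁.fst_mem_support_of_mem_edges he),
        .inr (P₁.snd_mem_support_of_mem_edges he)⟩
    · exact ⟨1, .inr (P₂.fst_mem_support_of_mem_edges he),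
        .inr (P₂.snd_mem_support_of_mem_edges he)⟩
    · exact ⟨2, .inr (P₃.fst_mem_support_of_mem_edges he),
        .inr (P₃.snd_mem_support_of_mem_edges he)⟩
    · rcases Sym2.eq_iff.1 he with ⟨rfl, rfl⟩ | ⟨rfl, rfl⟩ <;> exact ⟨1, by simp, by simp⟩
    · rcases Sym2.eq_iff.1 he with ⟨rfl, rfl⟩ | ⟨rfl, rfl⟩ <;> exact ⟨2, by simp, by simp⟩
    · rcases Sym2.eq_iff.1 he with ⟨rfl, rfl⟩ | ⟨rfl, rfl⟩ <;> exact ⟨1, by simp, by simp⟩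
    · rcases Sym2.eq_iff.1 he with ⟨rfl, rfl⟩ | ⟨rfl, rfl⟩ <;> exact ⟨0, by simp, by simp⟩
    · rcases Sym2.eq_iff.1 he with ⟨rfl, rfl⟩ | ⟨rfl, rfl⟩ <;> exact ⟨2, by simp, by simp⟩
    · rcases Sym2.eq_iff.1 he with ⟨rfl, rfl⟩ | ⟨rfl, rfl⟩ <;> exact ⟨2, by simp, by simp⟩
  · refine pairwise_inter_subset_of_fin_three ?_ ?_ ?_ <;> intro x hx <;> simp at hx ⊢ <;> grind

theorem IsLongPrism.nonempty_pieceSplit (h : IsLongPrism H) : Nonempty (PieceSplit H 3) := by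
  obtain ⟨a₁, a₂, a₃, b₁, b₂, b₃, P₁, P₂, P₃, ea₁₂, ea₁₃, ea₂₃, eb₁₂, eb₁₃, eb₂₃,
    hP₁, hP₂, hP₃, hl₁, hl₂, hl₃, hlong, d₁₂, d₁₃, d₂₃, -, hadj⟩ := h
  rcases hlong with hl₁ | hl₂ | hl₃
  · exact nonempty_pieceSplit_of_prism ea₁₂ ea₁₃ eb₁₂ eb₂₃ hP₁ hP₂ hP₃ hl₁ hl₂ hl₃ d₁₂ d₁₃ d₂₃
      fun u v huv => (hadj u v).1 huv
  · refine nonempty_pieceSplit_of_prism ea₁₂.symm ea₂₃ eb₁₂.symm eb₁₃ hP₂ hP₁ hP₃ hl₂ hl₁ hl₃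
      (fun v h₂ h₁ => d₁₂ v h₁ h₂) d₂₃ d₁₃ fun u v huv => ?_
    have := (hadj u v).1 huv
    rw [Sym2.eq_swap (a := a₁), Sym2.eq_swap (a := b₁) (b := b₂)] at this
    tauto
  · refine nonempty_pieceSplit_of_prism ea₁₃.symm ea₂₃.symm eb₁₃.symm eb₁₂ hP₃ hP₁ hP₂ hl₃ hl₁
      hl₂ (fun v h₃ h₁ => d₁₃ v h₁ h₃) (fun v h₃ h₂ => d₂₃ v h₂ h₃) d₁₂ fun u v huv => ?_
    have := (hadj u v).1 huv
    rw [Sym2.eq_swap (a := a₁) (b := a₃), Sym2.eq_swap (a := a₂), Sym2.eq_swap (a := b₁) (b := b₃),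
      Sym2.eq_swap (a := b₂)] at this
    tauto

theorem DiamondFree.comap {G : SimpleGraph V} (f : H ↪g G) (h : DiamondFree G) :
    DiamondFree H := by
  rintro ⟨a, b, c, d, hcd, hab, hac, had, hbc, hbd, hncd⟩
  exact h ⟨f a, f b, f c, f d, f.injective.ne hcd, f.map_adj_iff.2 hab, f.map_adj_iff.2 hac,
    f.map_adj_iff.2 had, f.map_adj_iff.2 hbc, f.map_adj_iff.2 hbd, f.map_adj_iff.not.2 hncd⟩

theorem DiamondFree.adj_of_mem_commonNeighbors (h : DiamondFree H) {v y x z : W}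
    (hvy : H.Adj v y) (hx : x ∈ H.commonNeighbors v y) (hz : z ∈ H.commonNeighbors v y)
    (hxz : x ≠ z) : H.Adj x z := by
  by_contra hnxz
  exact h ⟨v, y, x, z, hxz, hvy, hx.1, hz.1, hx.2, hz.2, hnxz⟩

theorem IsWheel.nonempty_pieceSplit (hH : DiamondFree H) (h : IsWheel H) :
    Nonempty (PieceSplit H 3) := by
  obtain ⟨v, x, c, hc, hlen, hv, hall, hchord, hcard⟩ := h
  set N := {y | y ∈ c.support ∧ H.Adj v y}
  obtain ⟨u, ⟨hu, hvu⟩, w, ⟨hw, hvw⟩, huw, hnuw⟩ :=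
    hc.exists_not_adj_of_three_le_ncard hlen hchord (fun y hy => hy.1) hcard
  obtain ⟨p, q, hp, hq, hpq, hedges⟩ := hc.exists_arcs hu hw
  set A := {y ∈ N | y = u ∨ H.Adj u y}
  have hN : A ∪ N \ A = N := Set.union_sdiff_cancel (Set.sep_subset _ _)
  have hwA : w ∉ A := fun hwA => hwA.2.elim huw.symm hnuw
  refine ⟨{
      a := u, b := w, A := A, B := N \ A,
      piece := ![insert v N, {y | y ∈ p.support} ∪ N, {y | y ∈ q.support} ∪ N],
      walk := ![Walk.cons hvu.symm (Walk.cons hvw Walk.nil), p, q],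
      a_mem := ⟨⟨hu, hvu⟩, .inl rfl⟩, b_mem := ⟨⟨hw, hvw⟩, hwA⟩, b_not_mem := hwA,
      not_adj := ?_, support_subset := ?_, exists_piece := ?_, inter_subset := ?_ }⟩
  · rintro y ⟨hyN, hy⟩ z ⟨hzN, hzA⟩ hyz
    refine hzA ⟨hzN, ?_⟩
    by_cases hzu : z = u
    · exact .inl hzu
    rcases hy with rfl | huy
    · exact .inr hyz
    · exact .inr (hH.adj_of_mem_commonNeighbors hyN.2 ⟨hvu, huy.symm⟩ ⟨hzN.2, hyz⟩ (Ne.symm hzu))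
  · intro i y hy
    fin_cases i
    · simp only [Fin.zero_eta, Matrix.cons_val_zero, Walk.support_cons, Walk.support_nil,
        List.mem_cons, List.not_mem_nil, or_false] at hy
      rcases hy with rfl | rfl | rfl
      exacts [.inr ⟨hu, hvu⟩, .inl rfl, .inr ⟨hw, hvw⟩]
    · exact .inl hy
    · exact .inl hy
  · intro y z hyz
    rcases hall y with rfl | hy
    · exact ⟨0, .inl rfl, .inr ⟨(hall z).resolve_left hyz.ne.symm, hyz⟩⟩
    rcases hall z with rfl | hz
    · exact ⟨0, .inr ⟨hy, hyz.symm⟩, .inl rfl⟩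
    rcases hedges _ (hchord y z hy hz hyz) with he | he
    · exact ⟨1, .inl (p.fst_mem_support_of_mem_edges he),
        .inl (p.snd_mem_support_of_mem_edges he)⟩
    · exact ⟨2, .inl (q.fst_mem_support_of_mem_edges he),
        .inl (q.snd_mem_support_of_mem_edges he)⟩
  · rw [hN]
    refine pairwise_inter_subset_of_fin_three ?_ ?_ ?_
    · rintro y ⟨rfl | hy, hy' | hy'⟩
      exacts [absurd (hp _ hy') hv, hy', hy, hy]
    · rintro y ⟨rfl | hy, hy' | hy'⟩
      exacts [absurd (hq _ hy') hv, hy', hy, hy]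
    · rintro y ⟨hy | hy, hy' | hy'⟩
      · rcases hpq y hy hy' with rfl | rfl
        exacts [⟨hu, hvu⟩, ⟨hw, hvw⟩]
      all_goals assumption

end Configurations

/-- every diamond-free graph in `𝒢_2` is (theta, pyramid, long prism,
wheel)-free. -/
theorem statement_16 (V : Type) [Finite V] (G : SimpleGraph V)
    (hdf : DiamondFree G) (hG : MemGk 2 G) (s : Set V) :
    ¬ IsTheta (G.induce s) ∧ ¬ IsPyramid (G.induce s) ∧
    ¬ IsLongPrism (G.induce s) ∧ ¬ IsWheel (G.induce s) := by
  have hsplit := hG.false_of_pieceSplit (Embedding.induce s)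
  exact ⟨fun h => h.nonempty_pieceSplit.elim hsplit, fun h => h.nonempty_pieceSplit.elim hsplit,
    fun h => h.nonempty_pieceSplit.elim hsplit,
    fun h => (h.nonempty_pieceSplit (hdf.comap (Embedding.induce s))).elim hsplit⟩

end PaperSep
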